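/- arXiv:1511.03180 — 6 statements merged into one kernel-verified Lean document; each statement's English description precedes it below -/
import Mathlib

section
/- For all real numbers a > 0 and b > 0, the complete elliptic integral Z(a,b) = ∫₀^{π/2} (a²·cos²θ + b²·sin²θ)^{-1/2} dθ is invariant under the Landen–Gauss arithmetic–geometric-mean step, i.e. ∫₀^{π/2} (a²·cos²θ + b²·sin²θ)^{-1/2} dθ = ∫₀^{π/2} (((a+b)/2)²·cos²θ + a·b·sin²θ)^{-1/2} dθ. -/
/-!
The substitution `x = √q · tan θ` turns `∫₀^{π/2} (p cos²θ + q sin²θ)^{-1/2} dθ` into the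
half-line integral `∫₀^∞ ((p + x²)(q + x²))^{-1/2} dx`. Gauss's substitution `u = (x - ab/x)/2`
maps `(0, ∞)` increasingly onto `ℝ`, with `du = (x² + ab)/(2x²) dx` and
`(((a+b)/2)² + u²)(ab + u²) = ((x² + ab)/(4x²))² (a² + x²)(b² + x²)`.
Hence the integral over `ℝ` of the even kernel for `(((a+b)/2)², ab)`, which is twice its
half-line integral, equals twice the half-line integral of the kernel for `(a², b²)`.
-/

open Real MeasureTheory Set

lemma rpow_neg_half_sq_mul {c t : ℝ} (hc : 0 ≤ c) (ht : 0 ≤ t) :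
    (c ^ 2 * t) ^ (-(1 / 2) : ℝ) = c⁻¹ * t ^ (-(1 / 2) : ℝ) := by
  rw [mul_rpow (sq_nonneg c) ht, rpow_neg (sq_nonneg c), ← sqrt_eq_rpow, sqrt_sq hc]

noncomputable def landenKernel (p q x : ℝ) : ℝ := ((p + x ^ 2) * (q + x ^ 2)) ^ (-(1 / 2) : ℝ)

lemma landenKernel_abs (p q x : ℝ) : landenKernel p q |x| = landenKernel p q x := by
  simp only [landenKernel, sq_abs]

lemma image_const_mul_tan_Ioo {s : ℝ} (hs : 0 < s) :
    (fun θ => s * tan θ) '' Ioo 0 (π / 2) = Ioi 0 := by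
  ext x
  refine ⟨?_, fun hx => ⟨arctan (x / s), ⟨?_, arctan_lt_pi_div_two _⟩, ?_⟩⟩
  · rintro ⟨θ, ⟨h0, h1⟩, rfl⟩
    exact mul_pos hs (tan_pos_of_pos_of_lt_pi_div_two h0 h1)
  · simpa [arctan_zero] using arctan_strictMono (div_pos (mem_Ioi.mp hx) hs)
  · simp only [tan_arctan]
    field_simp

theorem integral_trig_eq_setIntegral_landenKernel {p q : ℝ} (hp : 0 ≤ p) (hq : 0 < q) :
    ∫ θ in (0:ℝ)..(π / 2), (p * cos θ ^ 2 + q * sin θ ^ 2) ^ (-(1 / 2) : ℝ) =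
      ∫ x in Ioi 0, landenKernel p q x := by
  set s := √q
  have hs : 0 < s := sqrt_pos.mpr hq
  have hs2 : s ^ 2 = q := sq_sqrt hq.le
  have hcos : ∀ θ ∈ Ioo 0 (π / 2), 0 < cos θ := fun θ hθ =>
    cos_pos_of_mem_Ioo ⟨by linarith [hθ.1, pi_pos], hθ.2⟩
  have hinj : InjOn (fun θ => s * tan θ) (Ioo 0 (π / 2)) := fun θ₁ h₁ θ₂ h₂ h =>
    injOn_tan (Ioo_subset_Ioo_left (by linarith [pi_pos]) h₁)
      (Ioo_subset_Ioo_left (by linarith [pi_pos]) h₂) (mul_left_cancel₀ hs.ne' h)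
  have hderiv : ∀ θ ∈ Ioo 0 (π / 2),
      HasDerivWithinAt (fun θ => s * tan θ) (s * (1 / cos θ ^ 2)) (Ioo 0 (π / 2)) θ :=
    fun θ hθ => ((hasDerivAt_tan (hcos θ hθ).ne').const_mul s).hasDerivWithinAt
  rw [← image_const_mul_tan_Ioo hs,
    integral_image_eq_integral_abs_deriv_smul measurableSet_Ioo hderiv hinj,
    intervalIntegral.integral_of_le (by positivity), integral_Ioc_eq_integral_Ioo]
  refine setIntegral_congr_fun measurableSet_Ioo fun θ hθ => ?_
  have hc := hcos θ hθ
  have hfactor : (p + (s * tan θ) ^ 2) * (q + (s * tan θ) ^ 2) =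
      (s / cos θ ^ 2) ^ 2 * (p * cos θ ^ 2 + q * sin θ ^ 2) := by
    rw [tan_eq_sin_div_cos, ← hs2]
    field_simp
    linear_combination (p * cos θ ^ 2 + s ^ 2 * sin θ ^ 2) * sin_sq_add_cos_sq θ
  simp only [landenKernel, smul_eq_mul]
  rw [hfactor, rpow_neg_half_sq_mul (by positivity) (by positivity),
    abs_of_pos (by positivity)]
  field_simp

noncomputable def landenMap (c x : ℝ) : ℝ := (x - c / x) / 2

lemma hasDerivAt_landenMap (c : ℝ) {x : ℝ} (hx : x ≠ 0) :
    HasDerivAt (landenMap c) ((x ^ 2 + c) / (2 * x ^ 2)) x := by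
  have h : HasDerivAt (fun y => (y - c * y⁻¹) / 2) ((1 - c * -(x ^ 2)⁻¹) / 2) x :=
    ((hasDerivAt_id' x).sub ((hasDerivAt_inv hx).const_mul c)).div_const 2
  convert h using 1
  · funext y
    rw [landenMap, div_eq_mul_inv c]
  · field_simp
    ring

lemma strictMonoOn_landenMap {c : ℝ} (hc : 0 ≤ c) : StrictMonoOn (landenMap c) (Ioi 0) :=
  fun x hx y _ hxy => by
    have := div_le_div_of_nonneg_left hc hx hxy.le
    simp only [landenMap]
    linarith

lemma image_landenMap_Ioi {c : ℝ} (hc : 0 < c) : landenMap c '' Ioi 0 = univ := by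
  refine eq_univ_of_forall fun u => ?_
  have hroot : |u| < √(u ^ 2 + c) := by
    rw [← sqrt_sq_eq_abs]
    exact sqrt_lt_sqrt (sq_nonneg u) (by linarith)
  have hw : 0 < u + √(u ^ 2 + c) := by linarith [neg_abs_le u]
  refine ⟨u + √(u ^ 2 + c), hw, ?_⟩
  have hsq : √(u ^ 2 + c) ^ 2 = u ^ 2 + c := sq_sqrt (by positivity)
  simp only [landenMap]
  field_simp
  linear_combination hsq

lemma landenKernel_landenMap {a b x : ℝ} (hab : 0 ≤ a * b) (hx : 0 < x) :
    (x ^ 2 + a * b) / (2 * x ^ 2) *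
        landenKernel (((a + b) / 2) ^ 2) (a * b) (landenMap (a * b) x) =
      2 * landenKernel (a ^ 2) (b ^ 2) x := by
  have hfactor :
      (((a + b) / 2) ^ 2 + landenMap (a * b) x ^ 2) * (a * b + landenMap (a * b) x ^ 2) =
        ((x ^ 2 + a * b) / (4 * x ^ 2)) ^ 2 * ((a ^ 2 + x ^ 2) * (b ^ 2 + x ^ 2)) := by
    simp only [landenMap]
    field_simp
    ring
  have : 0 < x ^ 2 + a * b := by positivity
  simp only [landenKernel]
  rw [hfactor, rpow_neg_half_sq_mul (by positivity) (by positivity)]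
  field_simp
  ring

theorem setIntegral_landenKernel_agm {a b : ℝ} (ha : 0 < a) (hb : 0 < b) :
    ∫ x in Ioi 0, landenKernel (((a + b) / 2) ^ 2) (a * b) x =
      ∫ x in Ioi 0, landenKernel (a ^ 2) (b ^ 2) x := by
  have hab : 0 < a * b := mul_pos ha hb
  have hderiv : ∀ x ∈ Ioi (0 : ℝ),
      HasDerivWithinAt (landenMap (a * b)) ((x ^ 2 + a * b) / (2 * x ^ 2)) (Ioi 0) x :=
    fun x hx => (hasDerivAt_landenMap _ (ne_of_gt hx)).hasDerivWithinAt
  have hsubst := integral_image_eq_integral_abs_deriv_smul measurableSet_Ioi hderiv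
    (strictMonoOn_landenMap hab.le).injOn (landenKernel (((a + b) / 2) ^ 2) (a * b))
  rw [image_landenMap_Ioi hab, setIntegral_univ] at hsubst
  have hsymm := integral_comp_abs (f := landenKernel (((a + b) / 2) ^ 2) (a * b))
  simp only [landenKernel_abs] at hsymm
  suffices 2 * ∫ x in Ioi 0, landenKernel (((a + b) / 2) ^ 2) (a * b) x =
      2 * ∫ x in Ioi 0, landenKernel (a ^ 2) (b ^ 2) x by linarith
  rw [← hsymm, hsubst, ← integral_const_mul]
  refine setIntegral_congr_fun measurableSet_Ioi fun x hx => ?_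
  rw [smul_eq_mul, abs_of_pos (by have := mem_Ioi.mp hx; positivity),
    landenKernel_landenMap hab.le hx]

/-- Landen–Gauss invariance of the complete elliptic integral
`Z(a,b) = ∫₀^{π/2} (a² cos²θ + b² sin²θ)^{-1/2} dθ` under the AGM step
`(a,b) ↦ ((a+b)/2, √(ab))`. -/
theorem landen_gauss_agm_invariance (a b : ℝ) (ha : 0 < a) (hb : 0 < b) :
    (∫ θ in (0:ℝ)..(Real.pi / 2),
        (a ^ 2 * Real.cos θ ^ 2 + b ^ 2 * Real.sin θ ^ 2) ^ (-(1 / 2) : ℝ)) =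
    ∫ θ in (0:ℝ)..(Real.pi / 2),
        (((a + b) / 2) ^ 2 * Real.cos θ ^ 2 + a * b * Real.sin θ ^ 2) ^ (-(1 / 2) : ℝ) := by
  rw [integral_trig_eq_setIntegral_landenKernel (sq_nonneg a) (pow_pos hb 2),
    integral_trig_eq_setIntegral_landenKernel (sq_nonneg _) (mul_pos ha hb),
    setIntegral_landenKernel_agm ha hb]
end

section
/- Let d ≥ 1 and let J(x) = ‖x‖⁻² • x be the unit-sphere inversion on EuclideanSpace ℝ (Fin d). Then for every x ≠ 0, J is differentiable at x and the absolute value of the determinant of its derivative satisfies |det(D_x J)| = ‖x‖^(−2d). -/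
/-! The derivative of the inversion in the sphere of radius `R` about `c` at `x` is
`(R / dist x c)²` times the reflection in the hyperplane orthogonal to `x - c`; a reflection has
determinant `±1`, so the Jacobian determinant has absolute value `(R / dist x c)^(2 d)`. -/

open EuclideanGeometry Module

section

variable {F : Type*} [NormedAddCommGroup F] [InnerProductSpace ℝ F]

theorem inversion_zero_one_apply (x : F) : inversion (0 : F) 1 x = (‖x‖ ^ 2)⁻¹ • x := by
  simp [inversion, dist_zero_right]

variable [FiniteDimensional ℝ F]

theorem abs_det_smul_reflection (a : ℝ) (K : Submodule ℝ F) [K.HasOrthogonalProjection] :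
    |LinearMap.det ((a • (K.reflection : F →L[ℝ] F) : F →L[ℝ] F) : F →ₗ[ℝ] F)|
      = |a| ^ finrank ℝ F := by
  rw [ContinuousLinearMap.toLinearMap_smul, LinearMap.det_smul, abs_mul, abs_pow]
  have h : |LinearMap.det K.reflection.toLinearMap| = 1 := by
    rw [Submodule.det_reflection, abs_pow, abs_neg, abs_one, one_pow]
  exact mul_right_eq_self₀.mpr (Or.inl h)

theorem abs_det_fderiv_inversion {c x : F} (R : ℝ) (hx : x ≠ c) :
    |LinearMap.det (fderiv ℝ (inversion c R) x : F →ₗ[ℝ] F)|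
      = (R / dist x c) ^ (2 * finrank ℝ F) := by
  rw [(hasFDerivAt_inversion (R := R) hx).fderiv, abs_det_smul_reflection, abs_sq, pow_mul]

end

theorem inversion_jacobian_determinant_general
    (d : ℕ)
    (J : EuclideanSpace ℝ (Fin d) → EuclideanSpace ℝ (Fin d))
    (hJ : ∀ x, J x = (‖x‖ ^ 2)⁻¹ • x)
    (x : EuclideanSpace ℝ (Fin d)) (hx : x ≠ 0) :
    DifferentiableAt ℝ J x ∧
      |LinearMap.det (fderiv ℝ J x : EuclideanSpace ℝ (Fin d) →ₗ[ℝ] EuclideanSpace ℝ (Fin d))|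
        = ‖x‖ ^ (-(2 * (d : ℝ))) := by
  obtain rfl : J = inversion 0 1 := funext fun y => (hJ y).trans (inversion_zero_one_apply y).symm
  refine ⟨(hasFDerivAt_inversion (R := 1) hx).differentiableAt, ?_⟩
  rw [abs_det_fderiv_inversion 1 hx, finrank_euclideanSpace_fin, dist_zero_right, one_div,
    Real.rpow_neg (norm_nonneg x), inv_pow]
  norm_cast

/-- The unit-sphere inversion `J(x) = ‖x‖⁻² • x` on `d`-dimensional Euclidean space
(`d ≥ 1`) is differentiable at every `x ≠ 0`, and the absolute value of the determinant
of its derivative there equals `‖x‖^(−2d)`. -/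
theorem inversion_jacobian_determinant
    (d : ℕ) (hd : 1 ≤ d)
    (J : EuclideanSpace ℝ (Fin d) → EuclideanSpace ℝ (Fin d))
    (hJ : ∀ x, J x = (‖x‖ ^ 2)⁻¹ • x)
    (x : EuclideanSpace ℝ (Fin d)) (hx : x ≠ 0) :
    DifferentiableAt ℝ J x ∧
      |LinearMap.det (fderiv ℝ J x : EuclideanSpace ℝ (Fin d) →ₗ[ℝ] EuclideanSpace ℝ (Fin d))|
        = ‖x‖ ^ (-(2 * (d : ℝ))) :=
  inversion_jacobian_determinant_general d J hJ x hx
end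

section
/- Let p be a prime and d ≥ 1, and equip Fin d → ℚ_p with the sup norm ‖x‖ = max_i |x_i|_p. Let x, y be nonzero and let m_x, m_y ∈ ℤ be such that ‖x‖ = p^(−m_x) and ‖y‖ = p^(−m_y). Define the p-adic inversion by J(x) = (p : ℚ_p)^(−2 m_x) • x and J(y) = (p : ℚ_p)^(−2 m_y) • y. Then ‖J(x) − J(y)‖ = ‖x − y‖ · ‖x‖⁻¹ · ‖y‖⁻¹. -/
open Finset in
/-- The sup metric on a finite product of ultrametric spaces is ultrametric. -/
lemma pi_isUltrametricDist {ι X : Type*} [Fintype ι] [PseudoMetricSpace X]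
    [IsUltrametricDist X] : IsUltrametricDist (ι → X) := by
  constructor
  intro f g h
  rw [dist_pi_def, dist_pi_def, dist_pi_def, ← NNReal.coe_max]
  norm_cast
  refine Finset.sup_le fun i _ => ?_
  calc nndist (f i) (h i) ≤ max (nndist (f i) (g i)) (nndist (g i) (h i)) := by
        exact_mod_cast dist_triangle_max (f i) (g i) (h i)
    _ ≤ max (univ.sup fun i => nndist (f i) (g i)) (univ.sup fun i => nndist (g i) (h i)) :=
        max_le_max (Finset.le_sup (f := fun i => nndist (f i) (g i)) (mem_univ i))
          (Finset.le_sup (f := fun i => nndist (g i) (h i)) (mem_univ i))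

lemma padic_norm_zpow' (p : ℕ) [Fact p.Prime] (k : ℤ) :
    ‖((p : ℚ_[p]) ^ k)‖ = (p : ℝ) ^ (-k) := by
  rw [norm_zpow, Padic.norm_p, ← zpow_neg_one, ← zpow_mul]
  ring_nf

/-- The key asymmetric case: `mx < my`, i.e. `‖x‖ > ‖y‖`. -/
lemma padic_inversion_aux
    (p : ℕ) [Fact p.Prime] (d : ℕ)
    (x y : Fin d → ℚ_[p])
    (mx my : ℤ) (hlt : mx < my)
    (hmx : ‖x‖ = (p : ℝ) ^ (-mx)) (hmy : ‖y‖ = (p : ℝ) ^ (-my)) :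
    ‖((p : ℚ_[p]) ^ (-(2 * mx))) • x - ((p : ℚ_[p]) ^ (-(2 * my))) • y‖
      = ‖x - y‖ * ‖x‖⁻¹ * ‖y‖⁻¹ := by
  have := pi_isUltrametricDist (ι := Fin d) (X := ℚ_[p])
  have hp1 : (1 : ℝ) < (p : ℝ) := by exact_mod_cast (Fact.out : p.Prime).one_lt
  have hp0 : (0 : ℝ) < (p : ℝ) := lt_trans one_pos hp1
  -- norms of the scaled vectors
  have hnx : ‖((p : ℚ_[p]) ^ (-(2 * mx))) • x‖ = (p : ℝ) ^ mx := by
    rw [norm_smul, padic_norm_zpow', hmx, neg_neg, ← zpow_add₀ (ne_of_gt hp0)]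
    ring_nf
  have hny : ‖((p : ℚ_[p]) ^ (-(2 * my))) • y‖ = (p : ℝ) ^ my := by
    rw [norm_smul, padic_norm_zpow', hmy, neg_neg, ← zpow_add₀ (ne_of_gt hp0)]
    ring_nf
  have hne : ‖((p : ℚ_[p]) ^ (-(2 * mx))) • x‖ ≠ ‖((p : ℚ_[p]) ^ (-(2 * my))) • y‖ := by
    rw [hnx, hny]
    exact ne_of_lt (zpow_lt_zpow_right₀ hp1 hlt)
  have hxy : ‖x - y‖ = ‖x‖ := by
    have hne' : ‖x‖ ≠ ‖-y‖ := by
      rw [norm_neg, hmx, hmy]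
      exact ne_of_gt (zpow_lt_zpow_right₀ hp1 (by omega : -my < -mx))
    have := IsUltrametricDist.norm_add_eq_max_of_norm_ne_norm hne'
    rw [← sub_eq_add_neg] at this
    rw [this, norm_neg, hmx, hmy, max_eq_left
      (le_of_lt (zpow_lt_zpow_right₀ hp1 (by omega : -my < -mx)))]
  rw [sub_eq_add_neg, IsUltrametricDist.norm_add_eq_max_of_norm_ne_norm
      (by rwa [norm_neg]), norm_neg, hnx, hny,
    max_eq_right (le_of_lt (zpow_lt_zpow_right₀ hp1 hlt)), hxy, hmx, hmy,
    ← zpow_neg, ← zpow_neg, neg_neg, neg_neg, ← zpow_add₀ (ne_of_gt hp0),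
    ← zpow_add₀ (ne_of_gt hp0)]
  ring_nf

/-- Fundamental identity for the `p`-adic inversion `J(x) = |x|² x` on `ℚ_p^d` with the
sup norm: writing `‖x‖ = p^(−m_x)` and implementing `J(x) = (p : ℚ_p)^(−2m_x) • x`,
one has `‖J(x) − J(y)‖ = ‖x − y‖ ⬝ ‖x‖⁻¹ ⬝ ‖y‖⁻¹`. -/
theorem padic_inversion_fundamental_identity
    (p : ℕ) [Fact p.Prime] (d : ℕ) (hd : 1 ≤ d)
    (x y : Fin d → ℚ_[p]) (hx : x ≠ 0) (hy : y ≠ 0)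
    (mx my : ℤ)
    (hmx : ‖x‖ = (p : ℝ) ^ (-mx)) (hmy : ‖y‖ = (p : ℝ) ^ (-my)) :
    ‖((p : ℚ_[p]) ^ (-(2 * mx))) • x - ((p : ℚ_[p]) ^ (-(2 * my))) • y‖
      = ‖x - y‖ * ‖x‖⁻¹ * ‖y‖⁻¹ := by
  have hp1 : (1 : ℝ) < (p : ℝ) := by exact_mod_cast (Fact.out : p.Prime).one_lt
  have hp0 : (0 : ℝ) < (p : ℝ) := lt_trans one_pos hp1
  rcases lt_trichotomy mx my with h | h | h
  · exact padic_inversion_aux p d x y mx my h hmx hmy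
  · subst h
    rw [← smul_sub, norm_smul, padic_norm_zpow', hmx, hmy, ← zpow_neg, neg_neg, neg_neg,
      show (2 : ℤ) * mx = mx + mx by ring, zpow_add₀ (ne_of_gt hp0)]
    ring
  · have := padic_inversion_aux p d y x my mx h hmy hmx
    rw [← norm_neg, neg_sub] at this
    rw [this, ← norm_neg (y - x), neg_sub]
    ring
end

section
/- Let p be a prime and d ≥ 1, and equip Fin d → ℚ_p with the sup norm. Let x₁, x₂, x₃, x₄ be pairwise distinct nonzero points and let m₁, m₂, m₃, m₄ ∈ ℤ satisfy ‖x_i‖ = p^(−m_i). Define J(x_i) = (p : ℚ_p)^(−2 m_i) • x_i. Then the absolute cross-ratio is invariant: CR(J(x₁), J(x₂), J(x₃), J(x₄)) = CR(x₁, x₂, x₃, x₄). -/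
open IsUltrametricDist in
lemma pi_ultra {p d : ℕ} [Fact p.Prime] : IsUltrametricDist (Fin d → ℚ_[p]) := by
  apply isUltrametricDist_of_forall_norm_add_le_max_norm
  intro x y
  apply pi_norm_le_iff_of_nonneg (le_max_iff.2 (Or.inl (norm_nonneg _))) |>.2
  intro i
  exact (norm_add_le_max (x i) (y i)).trans
    (max_le_max (norm_le_pi_norm x i) (norm_le_pi_norm y i))

lemma norm_p_zpow {p : ℕ} [Fact p.Prime] (k : ℤ) :
    ‖((p : ℚ_[p]) ^ k)‖ = (p : ℝ) ^ (-k) := by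
  rw [norm_zpow, Padic.norm_p, inv_zpow, ← zpow_neg]

lemma key {p : ℕ} [Fact p.Prime] {d : ℕ} (x y : Fin d → ℚ_[p]) (m n : ℤ)
    (hx : ‖x‖ = (p : ℝ) ^ (-m)) (hy : ‖y‖ = (p : ℝ) ^ (-n)) :
    ‖((p : ℚ_[p]) ^ (-(2 * m))) • x - ((p : ℚ_[p]) ^ (-(2 * n))) • y‖
      = ‖x - y‖ * (p : ℝ) ^ (m + n) := by
  have := pi_ultra (p := p) (d := d)
  have hp1 : (1 : ℝ) < p := by exact_mod_cast (Fact.out : p.Prime).one_lt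
  have hp0 : (0 : ℝ) < p := by positivity
  rcases eq_or_ne m n with rfl | hmn
  · rw [← smul_sub, norm_smul, norm_p_zpow, neg_neg, mul_comm]
    congr 1
    rw [two_mul, zpow_add₀ hp0.ne']
  · have hxy : ‖x‖ ≠ ‖y‖ := fun h => hmn <| by
      have := zpow_right_injective₀ hp0 hp1.ne' (hx ▸ hy ▸ h)
      omega
    have nsub : ∀ a b : Fin d → ℚ_[p], ‖a‖ ≠ ‖b‖ → ‖a - b‖ = max ‖a‖ ‖b‖ := by
      intro a b h
      rw [sub_eq_add_neg, IsUltrametricDist.norm_add_eq_max_of_norm_ne_norm (by simpa using h),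
        norm_neg]
    have h1 : ‖x - y‖ = max ‖x‖ ‖y‖ := nsub _ _ hxy
    have hsx : ‖((p : ℚ_[p]) ^ (-(2 * m))) • x‖ = (p : ℝ) ^ m := by
      rw [norm_smul, norm_p_zpow, neg_neg, hx, ← zpow_add₀ hp0.ne']
      ring_nf
    have hsy : ‖((p : ℚ_[p]) ^ (-(2 * n))) • y‖ = (p : ℝ) ^ n := by
      rw [norm_smul, norm_p_zpow, neg_neg, hy, ← zpow_add₀ hp0.ne']
      ring_nf
    have hsxy : ‖((p : ℚ_[p]) ^ (-(2 * m))) • x‖ ≠ ‖((p : ℚ_[p]) ^ (-(2 * n))) • y‖ := by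
      rw [hsx, hsy]
      exact fun h => hmn (zpow_right_injective₀ hp0 hp1.ne' h)
    rw [nsub _ _ hsxy, hsx, hsy, h1, hx, hy]
    rcases lt_or_gt_of_ne hmn with h | h
    · rw [max_eq_right (zpow_le_zpow_right₀ hp1.le h.le),
        max_eq_left (zpow_le_zpow_right₀ hp1.le (by omega : -n ≤ -m)),
        ← zpow_add₀ hp0.ne']
      ring_nf
    · rw [max_eq_left (zpow_le_zpow_right₀ hp1.le h.le),
        max_eq_right (zpow_le_zpow_right₀ hp1.le (by omega : -m ≤ -n)),
        ← zpow_add₀ hp0.ne']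
      ring_nf


/-- Invariance of the absolute cross-ratio under the `p`-adic inversion `J(x) = |x|² x`
on `ℚ_p^d` with the sup norm: writing `‖x_i‖ = p^(−m_i)` and implementing
`J(x_i) = (p : ℚ_p)^(−2m_i) • x_i`, one has
`CR(J(x₁),J(x₂),J(x₃),J(x₄)) = CR(x₁,x₂,x₃,x₄)`. -/
theorem padic_inversion_preserves_cross_ratio
    (p : ℕ) [Fact p.Prime] (d : ℕ) (hd : 1 ≤ d)
    (x₁ x₂ x₃ x₄ : Fin d → ℚ_[p])
    (h₁ : x₁ ≠ 0) (h₂ : x₂ ≠ 0) (h₃ : x₃ ≠ 0) (h₄ : x₄ ≠ 0)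
    (h₁₂ : x₁ ≠ x₂) (h₁₃ : x₁ ≠ x₃) (h₁₄ : x₁ ≠ x₄)
    (h₂₃ : x₂ ≠ x₃) (h₂₄ : x₂ ≠ x₄) (h₃₄ : x₃ ≠ x₄)
    (m₁ m₂ m₃ m₄ : ℤ)
    (hm₁ : ‖x₁‖ = (p : ℝ) ^ (-m₁)) (hm₂ : ‖x₂‖ = (p : ℝ) ^ (-m₂))
    (hm₃ : ‖x₃‖ = (p : ℝ) ^ (-m₃)) (hm₄ : ‖x₄‖ = (p : ℝ) ^ (-m₄))
    (J₁ J₂ J₃ J₄ : Fin d → ℚ_[p])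
    (hJ₁ : J₁ = ((p : ℚ_[p]) ^ (-(2 * m₁))) • x₁)
    (hJ₂ : J₂ = ((p : ℚ_[p]) ^ (-(2 * m₂))) • x₂)
    (hJ₃ : J₃ = ((p : ℚ_[p]) ^ (-(2 * m₃))) • x₃)
    (hJ₄ : J₄ = ((p : ℚ_[p]) ^ (-(2 * m₄))) • x₄) :
    (‖J₁ - J₃‖ * ‖J₂ - J₄‖) / (‖J₁ - J₄‖ * ‖J₂ - J₃‖)
      = (‖x₁ - x₃‖ * ‖x₂ - x₄‖) / (‖x₁ - x₄‖ * ‖x₂ - x₃‖) := by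
  have hp0 : (0 : ℝ) < p := by
    exact_mod_cast (Fact.out : p.Prime).pos
  rw [hJ₁, hJ₂, hJ₃, hJ₄, key x₁ x₃ m₁ m₃ hm₁ hm₃, key x₂ x₄ m₂ m₄ hm₂ hm₄,
    key x₁ x₄ m₁ m₄ hm₁ hm₄, key x₂ x₃ m₂ m₃ hm₂ hm₃]
  have e : (p : ℝ) ^ (m₁ + m₃) * (p : ℝ) ^ (m₂ + m₄)
      = (p : ℝ) ^ (m₁ + m₄) * (p : ℝ) ^ (m₂ + m₃) := by
    rw [← zpow_add₀ hp0.ne', ← zpow_add₀ hp0.ne']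
    ring_nf
  have hne : (p : ℝ) ^ (m₁ + m₄) * (p : ℝ) ^ (m₂ + m₃) ≠ 0 := by positivity
  rw [show ‖x₁ - x₃‖ * (p : ℝ) ^ (m₁ + m₃) * (‖x₂ - x₄‖ * (p : ℝ) ^ (m₂ + m₄))
      = ‖x₁ - x₃‖ * ‖x₂ - x₄‖ * ((p : ℝ) ^ (m₁ + m₃) * (p : ℝ) ^ (m₂ + m₄)) by ring,
    show ‖x₁ - x₄‖ * (p : ℝ) ^ (m₁ + m₄) * (‖x₂ - x₃‖ * (p : ℝ) ^ (m₂ + m₃))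
      = ‖x₁ - x₄‖ * ‖x₂ - x₃‖ * ((p : ℝ) ^ (m₁ + m₄) * (p : ℝ) ^ (m₂ + m₃)) by ring,
    e, mul_div_mul_right _ _ hne]
end

section
/- For every integer L ≥ 2, the multiplicative subgroup of the positive reals generated by L and L+1 is dense in (0, ∞); that is, every real x > 0 lies in the closure of the set {(L : ℝ)^m · ((L+1) : ℝ)^n : m, n ∈ ℤ}. -/
lemma pow_ne_pow_succ (L p q : ℕ) (hL : 2 ≤ L) (hp : 0 < p) (hq : 0 < q) :
    L ^ q ≠ (L + 1) ^ p := by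
  intro h
  have hcop : Nat.Coprime L (L + 1) := by simpa using Nat.coprime_succ_self L
  have hdvd : L ∣ (L + 1) ^ p := h ▸ dvd_pow_self L hq.ne'
  have := Nat.Coprime.eq_one_of_dvd (Nat.Coprime.pow_right p hcop) hdvd
  omega

/-- For every integer `L ≥ 2`, the multiplicative subgroup of `(0,∞)` generated by `L`
and `(L+1)` is dense in `(0,∞)`: every `x > 0` lies in the closure of
`{L^m ⬝ (L+1)^n : m, n ∈ ℤ}`. -/
theorem dense_powers_consecutive (L : ℕ) (hL : 2 ≤ L) (x : ℝ) (hx : 0 < x) :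
    x ∈ closure {y : ℝ | ∃ m n : ℤ, y = (L : ℝ) ^ m * ((L : ℝ) + 1) ^ n} := by
  have hL1 : (1 : ℝ) < (L : ℝ) := by exact_mod_cast hL.trans_lt' one_lt_two
  have hL0 : (0 : ℝ) < (L : ℝ) := by linarith
  have hL10 : (0 : ℝ) < (L : ℝ) + 1 := by linarith
  set a := Real.log L with ha
  set b := Real.log ((L : ℝ) + 1) with hb
  have ha0 : 0 < a := Real.log_pos hL1
  have hb0 : 0 < b := Real.log_pos (by linarith)
  -- The additive subgroup {m a + n b}
  let S : AddSubgroup ℝ :=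
    { carrier := {y : ℝ | ∃ m n : ℤ, y = m * a + n * b}
      zero_mem' := ⟨0, 0, by norm_num⟩
      add_mem' := by
        rintro _ _ ⟨m1, n1, rfl⟩ ⟨m2, n2, rfl⟩
        exact ⟨m1 + m2, n1 + n2, by push_cast; ring⟩
      neg_mem' := by
        rintro _ ⟨m, n, rfl⟩
        exact ⟨-m, -n, by push_cast; ring⟩ }
  have hdense : Dense (S : Set ℝ) := by
    rcases S.dense_or_cyclic with h | ⟨c, hc⟩
    · exact h
    · exfalso
      have haS : a ∈ S := ⟨1, 0, by norm_num⟩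
      have hbS : b ∈ S := ⟨0, 1, by norm_num⟩
      rw [hc, AddSubgroup.mem_closure_singleton] at haS hbS
      obtain ⟨p, hpa⟩ := haS
      obtain ⟨q, hqb⟩ := hbS
      have hpa' : (p : ℝ) * c = a := by rw [← hpa, zsmul_eq_mul]
      have hqb' : (q : ℝ) * c = b := by rw [← hqb, zsmul_eq_mul]
      have hpq : (q : ℝ) * a = (p : ℝ) * b := by
        rw [← hpa', ← hqb']; ring
      have hpne : (p : ℝ) ≠ 0 := by
        intro h0; rw [h0, zero_mul] at hpa'; exact ha0.ne' hpa'.symm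
      -- get positive natural exponents
      have key : ∃ P Q : ℕ, 0 < P ∧ 0 < Q ∧ (Q : ℝ) * a = (P : ℝ) * b := by
        rcases hpne.lt_or_gt with hneg | hpos
        · have hqneg : (q : ℝ) < 0 := by nlinarith
          have hp' : p < 0 := by exact_mod_cast hneg
          have hq' : q < 0 := by exact_mod_cast hqneg
          refine ⟨(-p).toNat, (-q).toNat, by omega, by omega, ?_⟩
          have h1 : (((-p).toNat : ℤ) : ℝ) = ((-p : ℤ) : ℝ) := by
            exact_mod_cast congrArg Int.cast (Int.toNat_of_nonneg (by omega : (0:ℤ) ≤ -p))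
          have h2 : (((-q).toNat : ℤ) : ℝ) = ((-q : ℤ) : ℝ) := by
            exact_mod_cast congrArg Int.cast (Int.toNat_of_nonneg (by omega : (0:ℤ) ≤ -q))
          push_cast at h1 h2 ⊢
          rw [h1, h2]; push_cast; linarith
        · have hqpos : (0 : ℝ) < q := by nlinarith
          have hp' : 0 < p := by exact_mod_cast hpos
          have hq' : 0 < q := by exact_mod_cast hqpos
          refine ⟨p.toNat, q.toNat, by omega, by omega, ?_⟩
          have h1 : ((p.toNat : ℤ) : ℝ) = (p : ℝ) := by
            exact_mod_cast congrArg Int.cast (Int.toNat_of_nonneg hp'.le)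
          have h2 : ((q.toNat : ℤ) : ℝ) = (q : ℝ) := by
            exact_mod_cast congrArg Int.cast (Int.toNat_of_nonneg hq'.le)
          push_cast at h1 h2 ⊢
          rw [h1, h2]; exact hpq
      obtain ⟨P, Q, hP, hQ, hPQ⟩ := key
      have hlog : Real.log ((L : ℝ) ^ Q) = Real.log (((L : ℝ) + 1) ^ P) := by
        rw [Real.log_pow, Real.log_pow, ← ha, ← hb, hPQ]
      have heq : (L : ℝ) ^ Q = ((L : ℝ) + 1) ^ P :=
        Real.log_injOn_pos (Set.mem_Ioi.mpr (pow_pos hL0 _))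
          (Set.mem_Ioi.mpr (pow_pos hL10 _)) hlog
      have : (L : ℕ) ^ Q = (L + 1) ^ P := by exact_mod_cast heq
      exact pow_ne_pow_succ L P Q hL hP hQ this
  -- now push through exp
  have hxmem : Real.log x ∈ closure (S : Set ℝ) := hdense _
  have himg : Real.exp '' (S : Set ℝ) ⊆
      {y : ℝ | ∃ m n : ℤ, y = (L : ℝ) ^ m * ((L : ℝ) + 1) ^ n} := by
    rintro _ ⟨_, ⟨m, n, rfl⟩, rfl⟩
    refine ⟨m, n, ?_⟩
    rw [Real.exp_add]
    congr 1
    · rw [← Real.rpow_intCast, Real.rpow_def_of_pos hL0, mul_comm]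
    · rw [← Real.rpow_intCast, Real.rpow_def_of_pos hL10, mul_comm]
  have hmem : x ∈ closure (Real.exp '' (S : Set ℝ)) := by
    have h1 := Set.mem_image_of_mem Real.exp hxmem
    rw [Real.exp_log hx] at h1
    exact image_closure_subset_closure_image Real.continuous_exp h1
  exact closure_mono himg hmem
end

section
/- Let d ≥ 1 and let Δ be a real number with 0 < Δ < d/2. For every λ > 0 and all Schwartz functions f, g : EuclideanSpace ℝ (Fin d) → ℂ, define the rescaled test functions f_λ(x) = λ^(Δ−d) · f(λ⁻¹ • x) and g_λ(x) = λ^(Δ−d) · g(λ⁻¹ • x). Then the non-cut-off covariance is scale invariant: ∫ conj(f̂_λ(ξ)) ĝ_λ(ξ) ‖ξ‖^(−(d−2Δ)) dξ = ∫ conj(f̂(ξ)) ĝ(ξ) ‖ξ‖^(−(d−2Δ)) dξ. -/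
/-!
A dilation `x ↦ λ⁻¹ x` in physical space becomes the dilation `ξ ↦ λ ξ` in frequency space with
Jacobian factor `λ^d`, so `𝓕 f_λ (ξ) = λ^Δ 𝓕 f (λ ξ)`. The weight `‖ξ‖^(-(d - 2Δ))` is homogeneous,
so the integrand of `C₋∞(f_λ, g_λ)` is `λ^(2Δ) λ^(d - 2Δ) = λ^d` times the integrand of `C₋∞(f, g)`
evaluated at `λ ξ`, and the change of variables `η = λ ξ` cancels the factor `λ^d`.
-/

open MeasureTheory Module
open scoped FourierTransform RealInnerProductSpace ComplexConjugate

variable {V E : Type*} [NormedAddCommGroup V] [InnerProductSpace ℝ V] [FiniteDimensional ℝ V]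
  [MeasurableSpace V] [BorelSpace V] [NormedAddCommGroup E] [NormedSpace ℂ E]

theorem Real.fourier_comp_inv_smul (f : V → E) {c : ℝ} (hc : c ≠ 0) (ξ : V) :
    𝓕 (fun x ↦ f (c⁻¹ • x)) ξ = |c| ^ finrank ℝ V • 𝓕 f (c • ξ) := by
  have hinner (x : V) : ⟪c⁻¹ • x, c • ξ⟫ = ⟪x, ξ⟫ := by
    rw [real_inner_smul_left, real_inner_smul_right, inv_mul_cancel_left₀ hc]
  rw [Real.fourier_eq, Real.fourier_eq, ← abs_pow, ← Measure.integral_comp_inv_smul]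
  simp only [hinner]

theorem Real.fourier_const_mul (f : V → ℂ) (a : ℂ) (ξ : V) :
    𝓕 (fun x ↦ a * f x) ξ = a * 𝓕 f ξ := by
  simp only [Real.fourier_eq, ← integral_const_mul, smul_eq_mul, Circle.smul_def]
  congr 1; ext; ring

theorem Real.fourier_rpow_mul_comp_inv_smul (f : V → ℂ) {c : ℝ} (hc : 0 < c) (Δ : ℝ) (ξ : V) :
    𝓕 (fun x ↦ ((c ^ (Δ - finrank ℝ V) : ℝ) : ℂ) * f (c⁻¹ • x)) ξ
      = ((c ^ Δ : ℝ) : ℂ) * 𝓕 f (c • ξ) := by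
  rw [Real.fourier_const_mul, Real.fourier_comp_inv_smul f hc.ne', abs_of_pos hc,
    Complex.real_smul, ← mul_assoc, ← Complex.ofReal_mul, ← Real.rpow_natCast,
    ← Real.rpow_add hc, sub_add_cancel]

theorem integral_conj_mul_mul_norm_rpow_comp_smul (u v : V → ℂ) {c : ℝ} (hc : 0 < c) (Δ : ℝ) :
    ∫ ξ : V, conj (((c ^ Δ : ℝ) : ℂ) * u (c • ξ)) * (((c ^ Δ : ℝ) : ℂ) * v (c • ξ))
        * ((‖ξ‖ ^ (-((finrank ℝ V : ℝ) - 2 * Δ)) : ℝ) : ℂ)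
      = ∫ ξ : V, conj (u ξ) * v ξ * ((‖ξ‖ ^ (-((finrank ℝ V : ℝ) - 2 * Δ)) : ℝ) : ℂ) := by
  set s : ℝ := -((finrank ℝ V : ℝ) - 2 * Δ)
  set Φ : V → ℂ := fun ξ ↦ conj (u ξ) * v ξ * ((‖ξ‖ ^ s : ℝ) : ℂ)
  have hnorm (ξ : V) : ‖ξ‖ ^ s = c ^ (-s) * ‖c • ξ‖ ^ s := by
    rw [norm_smul, Real.norm_of_nonneg hc.le, Real.mul_rpow hc.le (norm_nonneg ξ), ← mul_assoc,
      ← Real.rpow_add hc, neg_add_cancel, Real.rpow_zero, one_mul]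
  have hpow : c ^ Δ * c ^ Δ * c ^ (-s) = c ^ finrank ℝ V := by
    rw [← Real.rpow_add hc, ← Real.rpow_add hc, ← Real.rpow_natCast]
    congr 1
    ring
  have hintegrand (ξ : V) :
      conj (((c ^ Δ : ℝ) : ℂ) * u (c • ξ)) * (((c ^ Δ : ℝ) : ℂ) * v (c • ξ)) * ((‖ξ‖ ^ s : ℝ) : ℂ)
        = ((c ^ finrank ℝ V : ℝ) : ℂ) * Φ (c • ξ) := by
    rw [hnorm, ← hpow]
    simp only [Φ, map_mul, Complex.conj_ofReal]
    push_cast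
    ring
  simp only [hintegrand]
  rw [integral_const_mul, Measure.integral_comp_smul_of_nonneg volume Φ c (hR := hc.le),
    Complex.real_smul, ← mul_assoc, ← Complex.ofReal_mul,
    mul_inv_cancel₀ (pow_ne_zero _ hc.ne'), Complex.ofReal_one, one_mul]

theorem fgf_covariance_scale_invariant_general
    (d : ℕ) (Δ : ℝ)
    (lam : ℝ) (hlam : 0 < lam)
    (f g : SchwartzMap (EuclideanSpace ℝ (Fin d)) ℂ)
    (flam glam : EuclideanSpace ℝ (Fin d) → ℂ)
    (hflam : ∀ x, flam x = ((lam ^ (Δ - (d : ℝ)) : ℝ) : ℂ) * f (lam⁻¹ • x))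
    (hglam : ∀ x, glam x = ((lam ^ (Δ - (d : ℝ)) : ℝ) : ℂ) * g (lam⁻¹ • x)) :
    (∫ ξ : EuclideanSpace ℝ (Fin d),
        (starRingEnd ℂ) (𝓕 flam ξ) * 𝓕 glam ξ * ((‖ξ‖ ^ (-((d : ℝ) - 2 * Δ)) : ℝ) : ℂ))
      = ∫ ξ : EuclideanSpace ℝ (Fin d),
          (starRingEnd ℂ) (𝓕 (⇑f) ξ) * 𝓕 (⇑g) ξ * ((‖ξ‖ ^ (-((d : ℝ) - 2 * Δ)) : ℝ) : ℂ) := by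
  have hdim : finrank ℝ (EuclideanSpace ℝ (Fin d)) = d := finrank_euclideanSpace_fin
  have hfourier (u : EuclideanSpace ℝ (Fin d) → ℂ) :=
    Real.fourier_rpow_mul_comp_inv_smul u hlam Δ
  simp only [hdim] at hfourier
  obtain rfl : flam = _ := funext hflam
  obtain rfl : glam = _ := funext hglam
  simp only [hfourier]
  simpa only [hdim] using integral_conj_mul_mul_norm_rpow_comp_smul (𝓕 ⇑f) (𝓕 ⇑g) hlam Δ

/-- Scale invariance of the non-cut-off covariance of the fractional Gaussian field: for
`0 < Δ < d/2`, `λ > 0` and Schwartz functions `f, g` on `d`-dimensional Euclidean space,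
with rescaled test functions `f_λ(x) = λ^(Δ−d) f(λ⁻¹ x)` and `g_λ(x) = λ^(Δ−d) g(λ⁻¹ x)`,
one has `C₋∞(f_λ, g_λ) = C₋∞(f, g)` where
`C₋∞(f,g) = ∫ conj (𝓕f ξ) 𝓕g ξ ‖ξ‖^(−(d−2Δ)) dξ`. -/
theorem fgf_covariance_scale_invariant
    (d : ℕ) (hd : 1 ≤ d) (Δ : ℝ) (hΔ : 0 < Δ) (hΔd : Δ < d / 2)
    (lam : ℝ) (hlam : 0 < lam)
    (f g : SchwartzMap (EuclideanSpace ℝ (Fin d)) ℂ)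
    (flam glam : EuclideanSpace ℝ (Fin d) → ℂ)
    (hflam : ∀ x, flam x = ((lam ^ (Δ - (d : ℝ)) : ℝ) : ℂ) * f (lam⁻¹ • x))
    (hglam : ∀ x, glam x = ((lam ^ (Δ - (d : ℝ)) : ℝ) : ℂ) * g (lam⁻¹ • x)) :
    (∫ ξ : EuclideanSpace ℝ (Fin d),
        (starRingEnd ℂ) (𝓕 flam ξ) * 𝓕 glam ξ * ((‖ξ‖ ^ (-((d : ℝ) - 2 * Δ)) : ℝ) : ℂ))
      = ∫ ξ : EuclideanSpace ℝ (Fin d),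
          (starRingEnd ℂ) (𝓕 (⇑f) ξ) * 𝓕 (⇑g) ξ * ((‖ξ‖ ^ (-((d : ℝ) - 2 * Δ)) : ℝ) : ℂ) :=
  fgf_covariance_scale_invariant_general d Δ lam hlam f g flam glam hflam hglam
end
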